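/- There exists an absolute constant κ > 0 such that the following holds. Let X be a nonempty finite set, C ⊆ {0,1}^X a concept class, α, ε ∈ (0, 1/2], and m, n ≥ 1 with α·m ≤ 1. Let P be a (0.01·α, 1/4)-probabilistic representation of C, and suppose n ≥ κ·(1 + size(P))/(ε·α·m). Then there exists an (ε,0)-user-level DP algorithm A : (X × {0,1})^{n·m} → PMF({0,1}^X) such that for every probability distribution D on X × {0,1} that is realizable by C (i.e., Err_D(c*) = 0 for some c* ∈ C), Pr_{z ∼ D^{n·m}, h ∼ A(z)}[Err_D(h) ≤ α] ≥ 0.6. -/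
import Mathlib


open scoped BigOperators Classical

noncomputable section
set_option linter.unusedSectionVars false
set_option linter.unnecessarySeqFocus false
set_option linter.unusedVariables false
set_option linter.deprecated false

/-- `P` is a probability mass function on a finite type. -/
def IsPMF {α : Type} [Fintype α] (P : α → ℝ) : Prop :=
  (∀ a, 0 ≤ P a) ∧ ∑ a, P a = 1

/-- The `e^ε`-hockey-stick divergence between pmfs on a finite type. -/
def hsDiv {O : Type} [Fintype O] (ε : ℝ) (P Q : O → ℝ) : ℝ :=
  ∑ o, max (P o - Real.exp ε * Q o) 0

/-- `P ≈_{ε,δ} Q`: both hockey-stick divergences are at most `δ`. -/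
def Indis {O : Type} [Fintype O] (ε δ : ℝ) (P Q : O → ℝ) : Prop :=
  hsDiv ε P Q ≤ δ ∧ hsDiv ε Q P ≤ δ

/-- User-level neighbors: the two inputs agree on all user blocks except possibly one. -/
def UserNeighbor {Z : Type} {n m : ℕ} (x x' : Fin n → Fin m → Z) : Prop :=
  ∃ i, ∀ j, j ≠ i → x j = x' j

/-- `Err_D(h) = Pr_{(x,y)∼D}[h(x) ≠ y]`. -/
def errD {X : Type} [Fintype X] (D : X × Bool → ℝ) (h : X → Bool) : ℝ :=
  ∑ z : X × Bool, if h z.1 ≠ z.2 then D z else 0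

/-- `P` (a distribution over finite sets of hypotheses) is an
`(α,β)`-probabilistic representation of the concept class `C`. -/
def IsPR {X : Type} [Fintype X] (α β : ℝ) (C : Set (X → Bool))
    (P : Finset (X → Bool) → ℝ) : Prop :=
  ∀ c ∈ C, ∀ DX : X → ℝ, IsPMF DX →
    (1 - β : ℝ) ≤ ∑ H : Finset (X → Bool),
      P H * (if ∃ h ∈ H, (∑ x : X, if c x ≠ h x then DX x else 0) ≤ α then 1 else 0)

lemma sum_fn_prod {k : ℕ} {β : Type} [Fintype β] (f : Fin k → β → ℝ) :
    (∑ z : Fin k → β, ∏ i, f i (z i)) = ∏ i, ∑ b, f i b := by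
  rw [Finset.prod_univ_sum, Fintype.piFinset_univ]

lemma exp_neg_le_inv {x : ℝ} (hx : 0 ≤ x) : Real.exp (-x) ≤ (1+x)⁻¹ := by
  rw [Real.exp_neg]
  exact inv_anti₀ (by linarith) (by linarith [Real.add_one_le_exp x])

section Mech
variable {X : Type} [Fintype X] {m n : ℕ}

def badU (h : X → Bool) (b : Fin m → X × Bool) : Prop := ∃ j, h (b j).1 ≠ (b j).2

def score (h : X → Bool) (z : Fin n → Fin m → X × Bool) : ℕ :=
  ∑ i, if badU h (z i) then 1 else 0

def wgt (ε : ℝ) (h : X → Bool) (z : Fin n → Fin m → X × Bool) : ℝ :=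
  Real.exp (-(ε/2) * (score h z : ℝ))

def Dm (D : X × Bool → ℝ) (b : Fin m → X × Bool) : ℝ := ∏ j, D (b j)

def qD (D : X × Bool → ℝ) (h : X → Bool) : ℝ :=
  ∑ b : Fin m → X × Bool, Dm D b * (if badU h b then 1 else 0)

lemma Dm_nonneg {D : X × Bool → ℝ} (hD : ∀ w, 0 ≤ D w) (b : Fin m → X × Bool) :
    0 ≤ Dm D b := Finset.prod_nonneg fun _ _ => hD _

lemma qD_nonneg {D : X × Bool → ℝ} (hD : ∀ w, 0 ≤ D w) (h : X → Bool) :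
    0 ≤ qD (m := m) D h :=
  Finset.sum_nonneg fun b _ => mul_nonneg (Dm_nonneg hD b) (by positivity)

lemma sum_Dm {D : X × Bool → ℝ} (hD : IsPMF D) : ∑ b : Fin m → X × Bool, Dm D b = 1 := by
  rw [show (∑ b : Fin m → X × Bool, Dm D b) = ∑ b : Fin m → X × Bool, ∏ j, D (b j) from rfl,
    sum_fn_prod (fun _ w => D w)]
  simp [hD.2]

lemma qD_le_one {D : X × Bool → ℝ} (hD : IsPMF D) (h : X → Bool) :
    qD (m := m) D h ≤ 1 := by
  rw [← sum_Dm (m := m) hD]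
  apply Finset.sum_le_sum
  intro b _
  have := Dm_nonneg hD.1 b
  split <;> simp <;> nlinarith

lemma errD_nonneg {D : X × Bool → ℝ} (hD : IsPMF D) (h : X → Bool) : 0 ≤ errD D h :=
  Finset.sum_nonneg fun w _ => by split
                                  · exact hD.1 w
                                  · exact le_refl 0

lemma errD_le_one {D : X × Bool → ℝ} (hD : IsPMF D) (h : X → Bool) : errD D h ≤ 1 := by
  rw [errD, ← hD.2]
  apply Finset.sum_le_sum
  intro w _
  split
  · exact le_refl _
  · exact hD.1 w

lemma sum_correct {D : X × Bool → ℝ} (hD : IsPMF D) (h : X → Bool) :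
    (∑ w : X × Bool, if h w.1 = w.2 then D w else 0) = 1 - errD D h := by
  have : (∑ w : X × Bool, if h w.1 = w.2 then D w else 0) + errD D h = 1 := by
    rw [errD, ← Finset.sum_add_distrib, ← hD.2]
    apply Finset.sum_congr rfl
    intro w _
    by_cases hw : h w.1 = w.2 <;> simp [hw]
  linarith

lemma qD_eq {D : X × Bool → ℝ} (hD : IsPMF D) (h : X → Bool) :
    qD (m := m) D h = 1 - (1 - errD D h)^m := by
  have h1 : (∑ b : Fin m → X × Bool, Dm D b * (if badU h b then 0 else 1))
      = (1 - errD D h)^m := by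
    have key : ∀ b : Fin m → X × Bool, Dm D b * (if badU h b then 0 else 1)
        = ∏ j, (if h (b j).1 = (b j).2 then D (b j) else 0) := by
      intro b
      by_cases hb : badU h b
      · obtain ⟨j, hj⟩ := hb
        have hz : (if h (b j).1 = (b j).2 then D (b j) else (0:ℝ)) = 0 := if_neg hj
        rw [if_pos ⟨j, hj⟩, mul_zero]
        exact (Finset.prod_eq_zero (Finset.mem_univ j) hz).symm
      · rw [if_neg hb, mul_one, Dm]
        apply Finset.prod_congr rfl
        intro j _
        rw [if_pos]
        by_contra hc
        exact hb ⟨j, hc⟩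
    rw [Finset.sum_congr rfl (fun b _ => key b),
      sum_fn_prod (fun _ w => if h w.1 = w.2 then D w else 0)]
    rw [Finset.prod_congr rfl (fun j _ => sum_correct hD h), Finset.prod_const,
      Finset.card_univ, Fintype.card_fin]
  have h2 : qD (m := m) D h + (∑ b : Fin m → X × Bool, Dm D b * (if badU h b then 0 else 1))
      = 1 := by
    have key2 : ∀ b : Fin m → X × Bool,
        Dm D b * (if badU h b then (1:ℝ) else 0) + Dm D b * (if badU h b then 0 else 1)
          = Dm D b := by
      intro b
      by_cases hb : badU h b <;> simp [hb]
    rw [qD, ← Finset.sum_add_distrib, Finset.sum_congr rfl (fun b _ => key2 b),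
      sum_Dm (m := m) hD]
  rw [h1] at h2; linarith

lemma mgf_eval {D : X × Bool → ℝ} (hD : IsPMF D) (h : X → Bool) (r : ℝ) :
    ∑ b : Fin m → X × Bool, Dm D b * (if badU h b then r else 1)
      = 1 + qD (m := m) D h * (r - 1) := by
  have : ∀ b : Fin m → X × Bool, Dm D b * (if badU h b then r else 1)
      = Dm D b + (Dm D b * (if badU h b then 1 else 0)) * (r - 1) := by
    intro b
    by_cases hb : badU h b <;> simp [hb] <;> ring
  rw [Finset.sum_congr rfl (fun b _ => this b), Finset.sum_add_distrib, sum_Dm hD,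
    ← Finset.sum_mul, ← qD]

lemma mgf_prod {D : X × Bool → ℝ} (φ : (Fin m → X × Bool) → ℝ) :
    ∑ z : Fin n → Fin m → X × Bool, (∏ i, ∏ j, D (z i j)) * ∏ i, φ (z i)
      = (∑ b : Fin m → X × Bool, Dm D b * φ b) ^ n := by
  have : ∀ z : Fin n → Fin m → X × Bool,
      (∏ i, ∏ j, D (z i j)) * ∏ i, φ (z i) = ∏ i, (Dm D (z i) * φ (z i)) := by
    intro z; rw [← Finset.prod_mul_distrib]; rfl
  rw [Finset.sum_congr rfl (fun z _ => this z),
    sum_fn_prod (fun _ b => Dm D b * φ b), Finset.prod_const, Finset.card_univ,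
    Fintype.card_fin]

lemma exp_score (h : X → Bool) (c : ℝ) (z : Fin n → Fin m → X × Bool) :
    Real.exp (c * (score h z : ℝ)) = ∏ i, (if badU h (z i) then Real.exp c else 1) := by
  rw [score]
  push_cast
  rw [Finset.mul_sum, Real.exp_sum]
  apply Finset.prod_congr rfl
  intro i _
  by_cases hb : badU h (z i) <;> simp [hb]

lemma chernoff_up {D : X × Bool → ℝ} (hD : IsPMF D) (h : X → Bool) (T : ℝ) :
    ∑ z : Fin n → Fin m → X × Bool, (∏ i, ∏ j, D (z i j)) *
        (if T ≤ (score h z : ℝ) then 1 else 0)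
      ≤ Real.exp (-(Real.log 2) * T) * (1 + qD (m := m) D h)^n := by
  have step : ∀ z : Fin n → Fin m → X × Bool,
      (∏ i, ∏ j, D (z i j)) * (if T ≤ (score h z : ℝ) then 1 else 0)
        ≤ Real.exp (-(Real.log 2) * T) *
            ((∏ i, ∏ j, D (z i j)) * ∏ i, (if badU h (z i) then (2:ℝ) else 1)) := by
    intro z
    have hμ : 0 ≤ ∏ i, ∏ j, D (z i j) :=
      Finset.prod_nonneg fun i _ => Finset.prod_nonneg fun j _ => hD.1 _
    have hexp : (if T ≤ (score h z : ℝ) then (1:ℝ) else 0)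
        ≤ Real.exp (-(Real.log 2) * T) * ∏ i, (if badU h (z i) then (2:ℝ) else 1) := by
      have he : ∏ i, (if badU h (z i) then (2:ℝ) else 1)
          = Real.exp (Real.log 2 * (score h z : ℝ)) := by
        rw [exp_score h (Real.log 2) z, Real.exp_log two_pos]
      rw [he, ← Real.exp_add]
      split
      · rw [show (1:ℝ) = Real.exp 0 from (Real.exp_zero).symm]
        apply Real.exp_le_exp.2
        have hl2 : (0:ℝ) ≤ Real.log 2 := Real.log_nonneg one_le_two
        nlinarith
      · positivity
    calc (∏ i, ∏ j, D (z i j)) * (if T ≤ (score h z : ℝ) then 1 else 0)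
        ≤ (∏ i, ∏ j, D (z i j)) * (Real.exp (-(Real.log 2) * T) *
            ∏ i, (if badU h (z i) then (2:ℝ) else 1)) := by
          exact mul_le_mul_of_nonneg_left hexp hμ
      _ = _ := by ring
  calc _ ≤ ∑ z : Fin n → Fin m → X × Bool, Real.exp (-(Real.log 2) * T) *
        ((∏ i, ∏ j, D (z i j)) * ∏ i, (if badU h (z i) then (2:ℝ) else 1)) :=
      Finset.sum_le_sum fun z _ => step z
    _ = Real.exp (-(Real.log 2) * T) * (1 + qD (m := m) D h)^n := by
      rw [← Finset.mul_sum, mgf_prod (fun b => if badU h b then (2:ℝ) else 1),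
        mgf_eval hD h 2]
      norm_num

lemma chernoff_down {D : X × Bool → ℝ} (hD : IsPMF D) (h : X → Bool) (T : ℝ) :
    ∑ z : Fin n → Fin m → X × Bool, (∏ i, ∏ j, D (z i j)) *
        (if (score h z : ℝ) ≤ T then 1 else 0)
      ≤ Real.exp ((Real.log 2) * T) * (1 - qD (m := m) D h / 2)^n := by
  have step : ∀ z : Fin n → Fin m → X × Bool,
      (∏ i, ∏ j, D (z i j)) * (if (score h z : ℝ) ≤ T then 1 else 0)
        ≤ Real.exp ((Real.log 2) * T) *
            ((∏ i, ∏ j, D (z i j)) * ∏ i, (if badU h (z i) then (2:ℝ)⁻¹ else 1)) := by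
    intro z
    have hμ : 0 ≤ ∏ i, ∏ j, D (z i j) :=
      Finset.prod_nonneg fun i _ => Finset.prod_nonneg fun j _ => hD.1 _
    have hexp : (if (score h z : ℝ) ≤ T then (1:ℝ) else 0)
        ≤ Real.exp ((Real.log 2) * T) * ∏ i, (if badU h (z i) then (2:ℝ)⁻¹ else 1) := by
      have he : ∏ i, (if badU h (z i) then (2:ℝ)⁻¹ else 1)
          = Real.exp (-(Real.log 2) * (score h z : ℝ)) := by
        rw [exp_score h (-(Real.log 2)) z, Real.exp_neg, Real.exp_log two_pos]
      rw [he, ← Real.exp_add]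
      split
      · rw [show (1:ℝ) = Real.exp 0 from (Real.exp_zero).symm]
        apply Real.exp_le_exp.2
        have hl2 : (0:ℝ) ≤ Real.log 2 := Real.log_nonneg one_le_two
        nlinarith
      · positivity
    calc (∏ i, ∏ j, D (z i j)) * (if (score h z : ℝ) ≤ T then 1 else 0)
        ≤ (∏ i, ∏ j, D (z i j)) * (Real.exp ((Real.log 2) * T) *
            ∏ i, (if badU h (z i) then (2:ℝ)⁻¹ else 1)) :=
          mul_le_mul_of_nonneg_left hexp hμ
      _ = _ := by ring
  calc _ ≤ ∑ z : Fin n → Fin m → X × Bool, Real.exp ((Real.log 2) * T) *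
        ((∏ i, ∏ j, D (z i j)) * ∏ i, (if badU h (z i) then (2:ℝ)⁻¹ else 1)) :=
      Finset.sum_le_sum fun z _ => step z
    _ = Real.exp ((Real.log 2) * T) * (1 - qD (m := m) D h / 2)^n := by
      rw [← Finset.mul_sum, mgf_prod (fun b => if badU h b then (2:ℝ)⁻¹ else 1),
        mgf_eval hD h 2⁻¹]
      norm_num
      ring_nf

def Wsum (ε : ℝ) (S : Finset (X → Bool)) (z : Fin n → Fin m → X × Bool) : ℝ :=
  ∑ h ∈ S, wgt ε h z

lemma Wsum_pos {ε : ℝ} {S : Finset (X → Bool)} (hS : S.Nonempty)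
    (z : Fin n → Fin m → X × Bool) : 0 < Wsum ε S z :=
  Finset.sum_pos (fun h _ => Real.exp_pos _) hS

lemma score_neighbor (h : X → Bool) {z z' : Fin n → Fin m → X × Bool}
    (i₀ : Fin n) (hi : ∀ j, j ≠ i₀ → z j = z' j) : score h z ≤ score h z' + 1 := by
  rw [score, score, ← Finset.add_sum_erase _ _ (Finset.mem_univ i₀),
    ← Finset.add_sum_erase _ (fun i => if badU h (z' i) then 1 else 0) (Finset.mem_univ i₀)]
  have h1 : (if badU h (z i₀) then 1 else 0) ≤ 1 := by split <;> omega
  have h2 : ∑ i ∈ Finset.univ.erase i₀, (if badU h (z i) then 1 else 0)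
      = ∑ i ∈ Finset.univ.erase i₀, (if badU h (z' i) then 1 else 0) := by
    apply Finset.sum_congr rfl
    intro i hi'
    rw [hi i (Finset.mem_erase.1 hi').1]
  omega

lemma wgt_neighbor {ε : ℝ} (hε : 0 ≤ ε) (h : X → Bool) {z z' : Fin n → Fin m → X × Bool}
    (hs : score h z' ≤ score h z + 1) : wgt ε h z ≤ Real.exp (ε/2) * wgt ε h z' := by
  rw [wgt, wgt, ← Real.exp_add, Real.exp_le_exp]
  have : (score h z' : ℝ) ≤ (score h z : ℝ) + 1 := by exact_mod_cast hs
  nlinarith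

lemma hsDiv_le_zero {O : Type} [Fintype O] {ε : ℝ} {P Q : O → ℝ}
    (h : ∀ o, P o ≤ Real.exp ε * Q o) : hsDiv ε P Q ≤ 0 := by
  rw [hsDiv]
  apply le_of_eq
  apply Finset.sum_eq_zero
  intro o _
  exact max_eq_right (by linarith [h o])

set_option maxHeartbeats 2000000 in
lemma core_acc {X : Type} [Fintype X] {m n : ℕ} (α ε s : ℝ)
    (hα : 0 < α) (hε : 0 < ε) (hε2 : ε ≤ 1/2) (hα2 : α ≤ 1/2)
    (hm : 1 ≤ m) (hn : 1 ≤ n) (ham : α*(m:ℝ) ≤ 1)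
    (hs : 0 ≤ s) (hbig : 1000*(1+s) ≤ ε*α*(m:ℝ)*(n:ℝ))
    (D : X × Bool → ℝ) (hD : IsPMF D)
    (h₀ : X → Bool) (H : Finset (X → Bool)) (hcard : (H.card : ℝ) ≤ Real.exp s)
    (hstar : ∃ h ∈ H, errD D h ≤ 0.01*α) :
    (0.85:ℝ) ≤ ∑ z : Fin n → Fin m → X × Bool, (∏ i, ∏ j, D (z i j)) *
       (∑ h ∈ insert h₀ H, if errD D h ≤ α then wgt ε h z / Wsum ε (insert h₀ H) z else 0) := by
  classical
  obtain ⟨hst, hstmem, hsterr⟩ := hstar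
  have hstS : hst ∈ insert h₀ H := Finset.mem_insert_of_mem hstmem
  have hSne : (insert h₀ H).Nonempty := ⟨h₀, Finset.mem_insert_self _ _⟩
  have hmR : (1:ℝ) ≤ (m:ℝ) := by exact_mod_cast hm
  have hnR : (1:ℝ) ≤ (n:ℝ) := by exact_mod_cast hn
  set amn : ℝ := α * (m:ℝ) * (n:ℝ) with hamn
  have hamn0 : 0 < amn := by rw [hamn]; positivity
  have hamn1 : 2000 * (1 + s) ≤ amn := by nlinarith
  have hamn2000 : (2000:ℝ) ≤ amn := by nlinarith
  have hl2a : (0.69:ℝ) ≤ Real.log 2 := by linarith [Real.log_two_gt_d9]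
  have hl2b : Real.log 2 ≤ 0.7 := by linarith [Real.log_two_lt_d9]
  have hexp100 : Real.exp (-100 : ℝ) ≤ 0.05 := by
    have h1 := exp_neg_le_inv (x := 100) (by norm_num)
    have h2 : ((1:ℝ)+100)⁻¹ ≤ 0.05 := by norm_num
    linarith
  have hcardS : (((insert h₀ H).card : ℕ) : ℝ) ≤ Real.exp (s+1) := by
    have h1 : ((insert h₀ H).card : ℝ) ≤ (H.card : ℝ) + 1 := by
      exact_mod_cast Finset.card_insert_le h₀ H
    have e1 : (1:ℝ) ≤ Real.exp s := by linarith [Real.add_one_le_exp s]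
    have e2 : (2:ℝ) ≤ Real.exp 1 := by linarith [Real.add_one_le_exp 1]
    have h2 : Real.exp s + 1 ≤ Real.exp (s+1) := by
      rw [Real.exp_add]; nlinarith
    linarith
  set T1 : ℝ := amn/10 with hT1
  set T2 : ℝ := amn/4 with hT2
  set μ : (Fin n → Fin m → X × Bool) → ℝ := fun z => ∏ i, ∏ j, D (z i j) with hμ
  have hμ0 : ∀ z, 0 ≤ μ z :=
    fun z => Finset.prod_nonneg fun i _ => Finset.prod_nonneg fun j _ => hD.1 _
  have hμ1 : ∑ z : Fin n → Fin m → X × Bool, μ z = 1 := by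
    calc ∑ z : Fin n → Fin m → X × Bool, μ z
        = ∑ z : Fin n → Fin m → X × Bool, (∏ i, ∏ j, D (z i j)) * ∏ _i : Fin n, (1:ℝ) := by
          simp [hμ]
      _ = (∑ b : Fin m → X × Bool, Dm D b * 1) ^ n := mgf_prod (fun _ => (1:ℝ))
      _ = 1 := by rw [Finset.sum_congr rfl fun b _ => mul_one (Dm D b), sum_Dm hD, one_pow]
  set SH : (Fin n → Fin m → X × Bool) → ℝ := fun z =>
    ∑ h ∈ insert h₀ H, if errD D h ≤ α then wgt ε h z / Wsum ε (insert h₀ H) z else 0 with hSH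
  have hSH0 : ∀ z, 0 ≤ SH z := by
    intro z
    apply Finset.sum_nonneg
    intro h _
    split
    · exact div_nonneg (Real.exp_nonneg _) (Wsum_pos hSne z).le
    · exact le_refl 0
  set I1 : (Fin n → Fin m → X × Bool) → ℝ := fun z =>
    if T1 ≤ (score hst z : ℝ) then 1 else 0 with hI1
  set I2 : (Fin n → Fin m → X × Bool) → ℝ := fun z =>
    if (∃ h ∈ insert h₀ H, α < errD D h ∧ (score h z : ℝ) ≤ T2) then 1 else 0 with hI2
  -- Bound 1 : Markov/Chernoff upper tail for the good hypothesis
  have hB1 : ∑ z : Fin n → Fin m → X × Bool, μ z * I1 z ≤ 0.05 := by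
    have hq0 : 0 ≤ qD (m := m) D hst := qD_nonneg hD.1 hst
    have hq : qD (m := m) D hst ≤ 0.01 * (α * m) := by
      rw [qD_eq hD hst]
      have hp0 : 0 ≤ errD D hst := errD_nonneg hD hst
      have hp1 : errD D hst ≤ 1 := errD_le_one hD hst
      have hbern := one_add_mul_le_pow (a := -errD D hst) (by linarith) m
      have hb2 : 1 - (m:ℝ) * errD D hst ≤ (1 - errD D hst)^m := by
        calc 1 - (m:ℝ) * errD D hst = 1 + (m:ℝ) * (-errD D hst) := by ring
          _ ≤ (1 + -errD D hst)^m := hbern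
          _ = (1 - errD D hst)^m := by ring_nf
      nlinarith
    calc ∑ z : Fin n → Fin m → X × Bool, μ z * I1 z
        ≤ Real.exp (-(Real.log 2) * T1) * (1 + qD (m := m) D hst)^n :=
          chernoff_up hD hst T1
      _ ≤ Real.exp (-(Real.log 2) * T1) * Real.exp ((n:ℝ) * qD (m := m) D hst) := by
          apply mul_le_mul_of_nonneg_left _ (Real.exp_nonneg _)
          calc (1 + qD (m := m) D hst)^n ≤ (Real.exp (qD (m := m) D hst))^n := by
                apply pow_le_pow_left₀ (by linarith)
                linarith [Real.add_one_le_exp (qD (m := m) D hst)]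
            _ = Real.exp ((n:ℝ) * qD (m := m) D hst) := (Real.exp_nat_mul _ n).symm
      _ = Real.exp ((n:ℝ) * qD (m := m) D hst - Real.log 2 * T1) := by
          rw [← Real.exp_add]; ring_nf
      _ ≤ Real.exp (-100 : ℝ) := by
          apply Real.exp_le_exp.2
          have h5 : (n:ℝ) * qD (m := m) D hst ≤ 0.01 * amn := by
            calc (n:ℝ) * qD (m := m) D hst ≤ (n:ℝ) * (0.01 * (α * m)) :=
                mul_le_mul_of_nonneg_left hq (by linarith)
              _ = 0.01 * amn := by rw [hamn]; ring
          have h6 : 0.69 * (amn/10) ≤ Real.log 2 * T1 := by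
            rw [hT1]
            apply mul_le_mul_of_nonneg_right hl2a (by linarith)
          nlinarith
      _ ≤ 0.05 := hexp100
  -- Bound 2 : Chernoff lower tail + union bound over bad hypotheses
  have hB2 : ∑ z : Fin n → Fin m → X × Bool, μ z * I2 z ≤ 0.05 := by
    have hunion : ∀ z, I2 z ≤ ∑ h ∈ insert h₀ H,
        (if α < errD D h ∧ (score h z : ℝ) ≤ T2 then (1:ℝ) else 0) := by
      intro z
      simp only [hI2]
      split
      · next hex =>
          obtain ⟨h', hh'S, hh'⟩ := hex
          have hnn : ∀ h ∈ insert h₀ H,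
              (0:ℝ) ≤ (if α < errD D h ∧ (score h z : ℝ) ≤ T2 then (1:ℝ) else 0) := by
            intro h _
            split
            · exact zero_le_one
            · exact le_refl 0
          have hle := Finset.single_le_sum hnn hh'S
          rw [if_pos hh'] at hle
          exact hle
      · apply Finset.sum_nonneg
        intro h _
        split
        · exact zero_le_one
        · exact le_refl 0
    have hperh : ∀ h ∈ insert h₀ H,
        (∑ z : Fin n → Fin m → X × Bool, μ z *
          (if α < errD D h ∧ (score h z : ℝ) ≤ T2 then (1:ℝ) else 0))
        ≤ Real.exp (-(150:ℝ) * (1+s)) := by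
      intro h _
      by_cases hbad : α < errD D h
      · have hq2 : α * m / 2 ≤ qD (m := m) D h := by
          rw [qD_eq hD h]
          have hp1 : errD D h ≤ 1 := errD_le_one hD h
          have c1 : (1 - errD D h)^m ≤ (1-α)^m :=
            pow_le_pow_left₀ (by linarith) (by linarith) m
          have c2 : (1-α)^m ≤ Real.exp (-(α*m)) := by
            have ce : (1-α) ≤ Real.exp (-α) := by linarith [Real.add_one_le_exp (-α)]
            calc (1-α)^m ≤ (Real.exp (-α))^m :=
                pow_le_pow_left₀ (by linarith) ce m
              _ = Real.exp ((m:ℝ) * (-α)) := (Real.exp_nat_mul _ m).symm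
              _ = Real.exp (-(α*m)) := by ring_nf
          have c3 : Real.exp (-(α*m)) ≤ (1+α*m)⁻¹ := exp_neg_le_inv (by positivity)
          have c4 : (1+α*m)⁻¹ ≤ 1 - α*m/2 := by
            rw [inv_eq_one_div, div_le_iff₀ (by positivity)]
            nlinarith
          nlinarith
        have hq1 : qD (m := m) D h ≤ 1 := qD_le_one hD h
        have hq0 : 0 ≤ qD (m := m) D h := qD_nonneg hD.1 h
        have hmono : ∀ z, μ z * (if α < errD D h ∧ (score h z : ℝ) ≤ T2 then (1:ℝ) else 0)
            ≤ μ z * (if (score h z : ℝ) ≤ T2 then (1:ℝ) else 0) := by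
          intro z
          apply mul_le_mul_of_nonneg_left _ (hμ0 z)
          by_cases hsc : (score h z : ℝ) ≤ T2
          · rw [if_pos hsc]
            split
            · exact le_refl 1
            · exact zero_le_one
          · rw [if_neg hsc, if_neg (fun hand => hsc hand.2)]
        calc ∑ z : Fin n → Fin m → X × Bool, μ z *
              (if α < errD D h ∧ (score h z : ℝ) ≤ T2 then (1:ℝ) else 0)
            ≤ ∑ z : Fin n → Fin m → X × Bool, μ z *
              (if (score h z : ℝ) ≤ T2 then (1:ℝ) else 0) :=
              Finset.sum_le_sum fun z _ => hmono z
          _ ≤ Real.exp ((Real.log 2) * T2) * (1 - qD (m := m) D h / 2)^n :=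
              chernoff_down hD h T2
          _ ≤ Real.exp ((Real.log 2) * T2) * Real.exp (-((n:ℝ) * (qD (m := m) D h / 2))) := by
              apply mul_le_mul_of_nonneg_left _ (Real.exp_nonneg _)
              calc (1 - qD (m := m) D h / 2)^n ≤ (Real.exp (-(qD (m := m) D h / 2)))^n := by
                    apply pow_le_pow_left₀ (by linarith)
                    linarith [Real.add_one_le_exp (-(qD (m := m) D h / 2))]
                _ = Real.exp ((n:ℝ) * (-(qD (m := m) D h / 2))) := (Real.exp_nat_mul _ n).symm
                _ = Real.exp (-((n:ℝ) * (qD (m := m) D h / 2))) := by ring_nf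
          _ = Real.exp ((Real.log 2) * T2 - (n:ℝ) * (qD (m := m) D h / 2)) := by
              rw [← Real.exp_add]; ring_nf
          _ ≤ Real.exp (-(150:ℝ) * (1+s)) := by
              apply Real.exp_le_exp.2
              have d1 : Real.log 2 * T2 ≤ 0.7 * (amn/4) := by
                rw [hT2]
                apply mul_le_mul_of_nonneg_right hl2b (by linarith)
              have d2 : amn/4 ≤ (n:ℝ) * (qD (m := m) D h / 2) := by
                calc amn/4 = (n:ℝ) * ((α * m / 2) / 2) := by rw [hamn]; ring
                  _ ≤ (n:ℝ) * (qD (m := m) D h / 2) := by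
                    apply mul_le_mul_of_nonneg_left _ (by linarith)
                    linarith
              nlinarith
      · have : ∀ z : Fin n → Fin m → X × Bool, μ z *
            (if α < errD D h ∧ (score h z : ℝ) ≤ T2 then (1:ℝ) else 0) = 0 := by
          intro z
          rw [if_neg (fun hand => hbad hand.1), mul_zero]
        rw [Finset.sum_congr rfl fun z _ => this z, Finset.sum_const_zero]
        positivity
    calc ∑ z : Fin n → Fin m → X × Bool, μ z * I2 z
        ≤ ∑ z : Fin n → Fin m → X × Bool, μ z * ∑ h ∈ insert h₀ H,
            (if α < errD D h ∧ (score h z : ℝ) ≤ T2 then (1:ℝ) else 0) :=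
          Finset.sum_le_sum fun z _ => mul_le_mul_of_nonneg_left (hunion z) (hμ0 z)
      _ = ∑ h ∈ insert h₀ H, ∑ z : Fin n → Fin m → X × Bool, μ z *
            (if α < errD D h ∧ (score h z : ℝ) ≤ T2 then (1:ℝ) else 0) := by
          rw [Finset.sum_comm]
          apply Finset.sum_congr rfl
          intro z _
          rw [Finset.mul_sum]
      _ ≤ ∑ _h ∈ insert h₀ H, Real.exp (-(150:ℝ) * (1+s)) :=
          Finset.sum_le_sum hperh
      _ = ((insert h₀ H).card : ℝ) * Real.exp (-(150:ℝ) * (1+s)) := by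
          rw [Finset.sum_const, nsmul_eq_mul]
      _ ≤ Real.exp (s+1) * Real.exp (-(150:ℝ) * (1+s)) :=
          mul_le_mul_of_nonneg_right hcardS (Real.exp_nonneg _)
      _ = Real.exp ((s+1) + (-(150:ℝ) * (1+s))) := (Real.exp_add _ _).symm
      _ ≤ Real.exp (-100 : ℝ) := Real.exp_le_exp.2 (by nlinarith)
      _ ≤ 0.05 := hexp100
  -- Bound 3 : the exponential mechanism picks a low-score hypothesis
  have hB3 : ∀ z, ¬ (T1 ≤ (score hst z : ℝ)) →
      ¬ (∃ h ∈ insert h₀ H, α < errD D h ∧ (score h z : ℝ) ≤ T2) →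
      1 - SH z ≤ 0.05 := by
    intro z hz1 hz2
    push_neg at hz1 hz2
    have hW : 0 < Wsum ε (insert h₀ H) z := Wsum_pos hSne z
    have hsum1 : ∑ h ∈ insert h₀ H, wgt ε h z / Wsum ε (insert h₀ H) z = 1 := by
      rw [← Finset.sum_div, ← Wsum, div_self hW.ne']
    have hsplit : 1 - SH z = ∑ h ∈ insert h₀ H,
        (if errD D h ≤ α then 0 else wgt ε h z / Wsum ε (insert h₀ H) z) := by
      simp only [hSH]
      rw [ ← hsum1, ← Finset.sum_sub_distrib]
      apply Finset.sum_congr rfl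
      intro h _
      by_cases hc : errD D h ≤ α <;> simp [hc]
    have hterm : ∀ h ∈ insert h₀ H,
        (if errD D h ≤ α then 0 else wgt ε h z / Wsum ε (insert h₀ H) z)
          ≤ Real.exp (ε/2 * (T1 - T2)) := by
      intro h hhS
      split
      · positivity
      · next hc =>
        push_neg at hc
        have hscore : T2 < (score h z : ℝ) := hz2 h hhS hc
        have hwh : wgt ε h z ≤ Real.exp (-(ε/2) * T2) := by
          rw [wgt]
          apply Real.exp_le_exp.2
          nlinarith
        have hWlow : Real.exp (-(ε/2) * T1) ≤ Wsum ε (insert h₀ H) z := by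
          have h1 : Real.exp (-(ε/2) * T1) ≤ wgt ε hst z := by
            rw [wgt]
            apply Real.exp_le_exp.2
            nlinarith
          calc Real.exp (-(ε/2) * T1) ≤ wgt ε hst z := h1
            _ ≤ Wsum ε (insert h₀ H) z := by
              rw [Wsum]
              exact Finset.single_le_sum (f := fun h' => wgt ε h' z)
                (fun h' _ => Real.exp_nonneg _) hstS
        calc wgt ε h z / Wsum ε (insert h₀ H) z
            ≤ Real.exp (-(ε/2) * T2) / Real.exp (-(ε/2) * T1) :=
              div_le_div₀ (Real.exp_nonneg _) hwh (Real.exp_pos _) hWlow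
          _ = Real.exp (ε/2 * (T1 - T2)) := by
              rw [← Real.exp_sub]; ring_nf
    have hεamn : 1000 * (1+s) ≤ ε * amn := by rw [hamn]; nlinarith
    calc 1 - SH z ≤ ∑ _h ∈ insert h₀ H, Real.exp (ε/2 * (T1 - T2)) := by
          rw [hsplit]; exact Finset.sum_le_sum hterm
      _ = ((insert h₀ H).card : ℝ) * Real.exp (ε/2 * (T1 - T2)) := by
          rw [Finset.sum_const, nsmul_eq_mul]
      _ ≤ Real.exp (s+1) * Real.exp (ε/2 * (T1 - T2)) :=
          mul_le_mul_of_nonneg_right hcardS (Real.exp_nonneg _)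
      _ = Real.exp ((s+1) + ε/2 * (T1 - T2)) := (Real.exp_add _ _).symm
      _ ≤ Real.exp (-70 : ℝ) := by
          apply Real.exp_le_exp.2
          have : ε/2 * (T2 - T1) = 3 * (ε * amn) / 40 := by rw [hT1, hT2]; ring
          nlinarith
      _ ≤ 0.05 := by
          have h1 := exp_neg_le_inv (x := 70) (by norm_num)
          have h2 : ((1:ℝ)+70)⁻¹ ≤ 0.05 := by norm_num
          linarith
  -- Assemble
  have hkey : ∀ z, μ z * (1 - SH z) ≤ μ z * (I1 z + I2 z + 0.05) := by
    intro z
    apply mul_le_mul_of_nonneg_left _ (hμ0 z)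
    have hI1nn : 0 ≤ I1 z := by simp only [hI1]; split; exact zero_le_one; exact le_refl 0
    have hI2nn : 0 ≤ I2 z := by simp only [hI2]; split; exact zero_le_one; exact le_refl 0
    by_cases hz1 : T1 ≤ (score hst z : ℝ)
    · have h1 : I1 z = 1 := by simp only [hI1]; exact if_pos hz1
      rw [h1]
      linarith [hSH0 z]
    · by_cases hz2 : ∃ h ∈ insert h₀ H, α < errD D h ∧ (score h z : ℝ) ≤ T2
      · have h2 : I2 z = 1 := by simp only [hI2]; exact if_pos hz2
        rw [h2]
        linarith [hSH0 z]
      · linarith [hB3 z hz1 hz2]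
  have hsplit2 : ∑ z : Fin n → Fin m → X × Bool, μ z * (1 - SH z)
      = 1 - ∑ z : Fin n → Fin m → X × Bool, μ z * SH z := by
    rw [eq_sub_iff_add_eq, ← Finset.sum_add_distrib]
    have hz : ∀ z, μ z * (1 - SH z) + μ z * SH z = μ z := fun z => by ring
    rw [Finset.sum_congr rfl fun z _ => hz z, hμ1]
  have hup : ∑ z : Fin n → Fin m → X × Bool, μ z * (1 - SH z) ≤ 0.15 := by
    calc ∑ z : Fin n → Fin m → X × Bool, μ z * (1 - SH z)
        ≤ ∑ z : Fin n → Fin m → X × Bool, μ z * (I1 z + I2 z + 0.05) :=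
          Finset.sum_le_sum fun z _ => hkey z
      _ = (∑ z : Fin n → Fin m → X × Bool, μ z * I1 z)
          + (∑ z : Fin n → Fin m → X × Bool, μ z * I2 z)
          + 0.05 * ∑ z : Fin n → Fin m → X × Bool, μ z := by
          rw [Finset.mul_sum, ← Finset.sum_add_distrib, ← Finset.sum_add_distrib]
          apply Finset.sum_congr rfl
          intro z _
          ring
      _ ≤ 0.05 + 0.05 + 0.05 * 1 := by
          rw [hμ1]
          linarith
      _ = 0.15 := by norm_num
  rw [hsplit2] at hup
  have : (0.85:ℝ) ≤ ∑ z : Fin n → Fin m → X × Bool, μ z * SH z := by linarith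
  exact this

lemma errD_le_disag {X : Type} [Fintype X] {D : X × Bool → ℝ} (hD : IsPMF D)
    (c h : X → Bool) :
    errD D h ≤ (∑ x : X, if c x ≠ h x then (D (x,true) + D (x,false)) else 0) + errD D c := by
  have ha : (∑ x : X, if c x ≠ h x then (D (x,true) + D (x,false)) else 0)
      = ∑ w : X × Bool, (if c w.1 ≠ h w.1 then D w else 0) := by
    rw [Fintype.sum_prod_type]
    apply Finset.sum_congr rfl
    intro x _
    rw [Fintype.sum_bool]
    by_cases hc : c x ≠ h x <;> simp [hc]
  rw [ha, errD, errD, ← Finset.sum_add_distrib]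
  apply Finset.sum_le_sum
  intro w _
  have := hD.1 w
  by_cases h1 : h w.1 ≠ w.2 <;> by_cases h2 : c w.1 ≠ h w.1 <;> by_cases h3 : c w.1 ≠ w.2 <;>
    simp only [if_pos h1, if_pos h2, if_pos h3, if_neg h1, if_neg h2, if_neg h3] <;>
    try linarith
  push_neg at h2 h3
  rw [h2] at h3
  exact absurd h3 h1

theorem main {X : Type} [Fintype X] [Nonempty X]
    (C : Set (X → Bool)) (α ε : ℝ) (hα : 0 < α) (hα2 : α ≤ 1 / 2) (hε : 0 < ε)
    (hε2 : ε ≤ 1 / 2) (m n : ℕ) (hm : 1 ≤ m) (hn : 1 ≤ n) (ham : α * m ≤ 1)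
    (P : Finset (X → Bool) → ℝ) (hP : IsPMF P)
    (hPR : ∀ c ∈ C, ∀ DX : X → ℝ, IsPMF DX →
      (1 - 1/4 : ℝ) ≤ ∑ H : Finset (X → Bool),
        P H * (if ∃ h ∈ H, (∑ x : X, if c x ≠ h x then DX x else 0) ≤ 0.01 * α then 1 else 0))
    (s : ℝ) (hlog : ∀ H : Finset (X → Bool), P H ≠ 0 → Real.log H.card ≤ s)
    (hbig : 1000 * (1 + s) / (ε * α * m) ≤ n) :
    ∃ A : (Fin n → Fin m → X × Bool) → (X → Bool) → ℝ,
      (∀ z, IsPMF (A z)) ∧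
      (∀ z z', UserNeighbor z z' → Indis ε 0 (A z) (A z')) ∧
      (∀ D : X × Bool → ℝ, IsPMF D → (∃ c ∈ C, errD D c = 0) →
        (0.6 : ℝ) ≤ ∑ z : Fin n → Fin m → X × Bool,
          (∏ i, ∏ j, D (z i j)) *
            ∑ h : X → Bool, if errD D h ≤ α then A z h else 0) := by
  classical
  set h₀ : X → Bool := fun _ => false with hh₀
  set A : (Fin n → Fin m → X × Bool) → (X → Bool) → ℝ := fun z h =>
    ∑ H : Finset (X → Bool), P H *
      (if h ∈ insert h₀ H then wgt ε h z / Wsum ε (insert h₀ H) z else 0) with hA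
  have hSne : ∀ H : Finset (X → Bool), (insert h₀ H).Nonempty :=
    fun H => ⟨h₀, Finset.mem_insert_self _ _⟩
  refine ⟨A, ?_, ?_, ?_⟩
  · -- PMF
    intro z
    constructor
    · intro h
      apply Finset.sum_nonneg
      intro H _
      apply mul_nonneg (hP.1 H)
      split
      · exact div_nonneg (Real.exp_nonneg _) (Wsum_pos (hSne H) z).le
      · exact le_refl 0
    · rw [hA, Finset.sum_comm]
      have : ∀ H : Finset (X → Bool), ∑ h : X → Bool,
          P H * (if h ∈ insert h₀ H then wgt ε h z / Wsum ε (insert h₀ H) z else 0)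
            = P H := by
        intro H
        rw [← Finset.mul_sum, Finset.sum_ite_mem, Finset.univ_inter, ← Finset.sum_div,
          ← Wsum, div_self (Wsum_pos (hSne H) z).ne', mul_one]
      rw [Finset.sum_congr rfl (fun H _ => this H), hP.2]
  · -- DP
    intro z z' hzz'
    obtain ⟨i₀, hi⟩ := hzz'
    have hi' : ∀ j, j ≠ i₀ → z' j = z j := fun j hj => (hi j hj).symm
    have key : ∀ (u v : Fin n → Fin m → X × Bool), (∀ j, j ≠ i₀ → u j = v j) →
        (∀ j, j ≠ i₀ → v j = u j) → ∀ h, A u h ≤ Real.exp ε * A v h := by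
      intro u v huv hvu h
      rw [hA, Finset.mul_sum]
      apply Finset.sum_le_sum
      intro H _
      rw [← mul_assoc, mul_comm (Real.exp ε) (P H), mul_assoc]
      apply mul_le_mul_of_nonneg_left _ (hP.1 H)
      split
      · have hWu := Wsum_pos (ε := ε) (hSne H) u
        have hWv := Wsum_pos (ε := ε) (hSne H) v
        have h1 : wgt ε h u ≤ Real.exp (ε/2) * wgt ε h v :=
          wgt_neighbor hε.le h (score_neighbor h i₀ hvu)
        have h2 : Wsum ε (insert h₀ H) v ≤ Real.exp (ε/2) * Wsum ε (insert h₀ H) u := by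
          rw [Wsum, Wsum, Finset.mul_sum]
          exact Finset.sum_le_sum fun h' _ =>
            wgt_neighbor hε.le h' (score_neighbor h' i₀ huv)
        have he : Real.exp (ε/2) * Real.exp (ε/2) = Real.exp ε := by
          rw [← Real.exp_add]; ring_nf
        have h3 : wgt ε h u * Wsum ε (insert h₀ H) v
            ≤ (Real.exp (ε/2) * wgt ε h v) * (Real.exp (ε/2) * Wsum ε (insert h₀ H) u) :=
          mul_le_mul h1 h2 hWv.le
            (mul_nonneg (Real.exp_nonneg _) (by rw [wgt]; positivity))
        have hgoal : wgt ε h u / Wsum ε (insert h₀ H) u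
            ≤ Real.exp ε * wgt ε h v / Wsum ε (insert h₀ H) v := by
          rw [div_le_div_iff₀ hWu hWv]
          calc wgt ε h u * Wsum ε (insert h₀ H) v
              ≤ Real.exp (ε/2) * wgt ε h v * (Real.exp (ε/2) * Wsum ε (insert h₀ H) u) := h3
            _ = (Real.exp (ε/2) * Real.exp (ε/2)) * (wgt ε h v * Wsum ε (insert h₀ H) u) := by
                ring
            _ = Real.exp ε * wgt ε h v * Wsum ε (insert h₀ H) u := by rw [he]; ring
        rw [mul_div_assoc] at hgoal
        exact hgoal
      · simp
    exact ⟨hsDiv_le_zero (key z z' hi hi'), hsDiv_le_zero (key z' z hi' hi)⟩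
  · -- accuracy
    intro D hD hreal
    obtain ⟨c, hcC, hc0⟩ := hreal
    set DX : X → ℝ := fun x => D (x, true) + D (x, false) with hDXdef
    have hDX : IsPMF DX := by
      constructor
      · intro x; have := hD.1 (x, true); have := hD.1 (x, false); simp only [hDXdef]; linarith
      · rw [hDXdef, ← hD.2, Fintype.sum_prod_type]
        apply Finset.sum_congr rfl
        intro x _
        rw [Fintype.sum_bool]
    have hrep := hPR c hcC DX hDX
    -- numeric prerequisites
    have hmR : (1:ℝ) ≤ (m:ℝ) := by exact_mod_cast hm
    have hnR : (1:ℝ) ≤ (n:ℝ) := by exact_mod_cast hn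
    have hs : 0 ≤ s := by
      have hone : (∑ H : Finset (X → Bool), P H) ≠ 0 := by rw [hP.2]; norm_num
      obtain ⟨H₀, _, hne⟩ := Finset.exists_ne_zero_of_sum_ne_zero hone
      have := hlog H₀ hne
      rcases Nat.eq_zero_or_pos H₀.card with hc | hc
      · rw [hc] at this; simpa using this
      · have : (0:ℝ) ≤ Real.log H₀.card :=
          Real.log_nonneg (by exact_mod_cast hc)
        linarith [hlog H₀ hne]
    have hbig' : 1000 * (1 + s) ≤ ε * α * (m:ℝ) * (n:ℝ) := by
      have hpos : 0 < ε * α * (m:ℝ) := by positivity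
      have := (div_le_iff₀ hpos).1 hbig
      nlinarith
    -- rewrite the goal as a sum over H
    have swap : (∑ z : Fin n → Fin m → X × Bool,
        (∏ i, ∏ j, D (z i j)) * ∑ h : X → Bool, if errD D h ≤ α then A z h else 0)
        = ∑ H : Finset (X → Bool), P H * (∑ z : Fin n → Fin m → X × Bool,
            (∏ i, ∏ j, D (z i j)) * (∑ h ∈ insert h₀ H,
              if errD D h ≤ α then wgt ε h z / Wsum ε (insert h₀ H) z else 0)) := by
      have e1 : ∀ z : Fin n → Fin m → X × Bool,
          (∑ h : X → Bool, if errD D h ≤ α then A z h else 0)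
          = ∑ H : Finset (X → Bool), P H * (∑ h ∈ insert h₀ H,
              if errD D h ≤ α then wgt ε h z / Wsum ε (insert h₀ H) z else 0) := by
        intro z
        have e2 : ∀ h : X → Bool, (if errD D h ≤ α then A z h else 0)
            = ∑ H : Finset (X → Bool), P H * (if h ∈ insert h₀ H then
                (if errD D h ≤ α then wgt ε h z / Wsum ε (insert h₀ H) z else 0) else 0) := by
          intro h
          by_cases hcond : errD D h ≤ α
          · rw [if_pos hcond, hA]
            exact Finset.sum_congr rfl fun H _ => by
              by_cases hmem : h ∈ insert h₀ H <;> simp [hmem, hcond]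
          · rw [if_neg hcond]
            symm
            exact Finset.sum_eq_zero fun H _ => by
              by_cases hmem : h ∈ insert h₀ H <;> simp [hmem, hcond]
        rw [Finset.sum_congr rfl (fun h _ => e2 h), Finset.sum_comm]
        apply Finset.sum_congr rfl
        intro H _
        rw [← Finset.mul_sum, Finset.sum_ite_mem, Finset.univ_inter]
      rw [Finset.sum_congr rfl (fun z _ => by rw [e1 z, Finset.mul_sum]), Finset.sum_comm]
      apply Finset.sum_congr rfl
      intro H _
      rw [Finset.mul_sum]
      apply Finset.sum_congr rfl
      intro z _
      ring
    rw [swap]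
    -- per-H bound
    have hterm : ∀ H : Finset (X → Bool),
        (0.85:ℝ) * (P H * (if ∃ h ∈ H, (∑ x : X, if c x ≠ h x then DX x else 0) ≤ 0.01 * α
            then 1 else 0))
        ≤ P H * (∑ z : Fin n → Fin m → X × Bool,
            (∏ i, ∏ j, D (z i j)) * (∑ h ∈ insert h₀ H,
              if errD D h ≤ α then wgt ε h z / Wsum ε (insert h₀ H) z else 0)) := by
      intro H
      by_cases hPH : P H = 0
      · simp [hPH]
      have hPpos : 0 ≤ P H := hP.1 H
      have hEnn : 0 ≤ ∑ z : Fin n → Fin m → X × Bool,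
          (∏ i, ∏ j, D (z i j)) * (∑ h ∈ insert h₀ H,
            if errD D h ≤ α then wgt ε h z / Wsum ε (insert h₀ H) z else 0) := by
        apply Finset.sum_nonneg
        intro z _
        apply mul_nonneg (Finset.prod_nonneg fun i _ => Finset.prod_nonneg fun j _ => hD.1 _)
        apply Finset.sum_nonneg
        intro h _
        split
        · exact div_nonneg (Real.exp_nonneg _) (Wsum_pos (hSne H) z).le
        · exact le_refl 0
      by_cases hg : ∃ h ∈ H, (∑ x : X, if c x ≠ h x then DX x else 0) ≤ 0.01 * α
      · rw [if_pos hg]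
        obtain ⟨hst, hmem, hdis⟩ := hg
        have herr : errD D hst ≤ 0.01 * α := by
          have h1 := errD_le_disag hD c hst
          rw [hc0] at h1
          simpa [hDXdef] using le_trans h1 (by simpa [hDXdef] using hdis)
        have hcard : (H.card : ℝ) ≤ Real.exp s := by
          rcases Nat.eq_zero_or_pos H.card with hc' | hc'
          · rw [hc']; simp [Real.exp_nonneg]
          · exact ((Real.log_le_iff_le_exp (by exact_mod_cast hc')).1 (hlog H hPH))
        have hacc := core_acc α ε s hα hε hε2 hα2 hm hn ham hs hbig' D hD h₀ H hcard
          ⟨hst, hmem, herr⟩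
        nlinarith
      · rw [if_neg hg]
        nlinarith
    calc (0.6:ℝ) ≤ 0.85 * (1 - 1/4) := by norm_num
      _ ≤ 0.85 * ∑ H : Finset (X → Bool), P H *
          (if ∃ h ∈ H, (∑ x : X, if c x ≠ h x then DX x else 0) ≤ 0.01 * α then 1 else 0) :=
        mul_le_mul_of_nonneg_left hrep (by norm_num)
      _ = ∑ H : Finset (X → Bool), 0.85 * (P H *
          (if ∃ h ∈ H, (∑ x : X, if c x ≠ h x then DX x else 0) ≤ 0.01 * α then 1 else 0)) :=
        Finset.mul_sum _ _ _
      _ ≤ _ := Finset.sum_le_sum fun H _ => hterm H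

/-- User-level pure-DP PAC learning upper bound via a probabilistic representation
of the concept class. -/
theorem user_level_pure_dp_pac_upper :
    ∃ κ > (0:ℝ),
      ∀ (X : Type) [Fintype X] [Nonempty X],
      ∀ C : Set (X → Bool), ∀ α ε : ℝ, 0 < α → α ≤ 1 / 2 → 0 < ε → ε ≤ 1 / 2 →
      ∀ m n : ℕ, 1 ≤ m → 1 ≤ n → α * m ≤ 1 →
      ∀ P : Finset (X → Bool) → ℝ, IsPMF P → IsPR (0.01 * α) (1 / 4) C P →
      ∀ s : ℝ, (∀ H : Finset (X → Bool), P H ≠ 0 → Real.log H.card ≤ s) →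
        κ * (1 + s) / (ε * α * m) ≤ n →
      ∃ A : (Fin n → Fin m → X × Bool) → (X → Bool) → ℝ,
        (∀ z, IsPMF (A z)) ∧
        (∀ z z', UserNeighbor z z' → Indis ε 0 (A z) (A z')) ∧
        (∀ D : X × Bool → ℝ, IsPMF D → (∃ c ∈ C, errD D c = 0) →
          (0.6 : ℝ) ≤ ∑ z : Fin n → Fin m → X × Bool,
            (∏ i, ∏ j, D (z i j)) *
              ∑ h : X → Bool, if errD D h ≤ α then A z h else 0) := by
  refine ⟨1000, by norm_num, ?_⟩
  intro X _ _ C α ε hα hα2 hε hε2 m n hm hn ham P hP hPR s hlog hbig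
  exact main C α ε hα hα2 hε hε2 m n hm hn ham P hP hPR s hlog hbig
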